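/- Let w be a Lyndon word occurring as the factor at interval [i..i+ℓ-1] of a larger word. If the Lroot of a run lies inside this interval but the run's Oroot starts at a position ≥ i+ℓ, then the Lroot ends at position i+ℓ-1 and the Oroot starts at position i+ℓ. -/

import Mathlib

open List

universe u

/-- The factor `w[i..j]` of a word (inclusive positions). -/
def factor {α : Type u} (w : List α) (i j : ℕ) : List α := (w.drop i).take (j - i + 1)

/-- `p` is a period length of the word `u`. -/
def HasPeriodLen {α : Type u} (u : List α) (p : ℕ) : Prop :=
  1 ≤ p ∧ ∀ k, k + p < u.length → u[k]? = u[k + p]?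

/-- The smallest period of a word. -/
noncomputable def minPeriod {α : Type u} (u : List α) : ℕ := sInf {p | HasPeriodLen u p}

/-- `[i..j]` is a run in `w`: the factor is periodic with smallest period at most half
its length, and the periodicity extends neither to the left nor to the right. -/
def IsRun {α : Type u} (w : List α) (i j : ℕ) : Prop :=
  i < j ∧ j < w.length ∧
  2 * minPeriod (factor w i j) ≤ j - i + 1 ∧
  (0 < i → minPeriod (factor w i j) < minPeriod (factor w (i - 1) j)) ∧
  (j + 1 < w.length → minPeriod (factor w i j) < minPeriod (factor w i (j + 1)))
/-- `k` is the starting position of the greatest proper suffix of the factor `w[i..j]`,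
with respect to the strict order `lt` on words. -/
def IsGreatestProperSuffixPos {α : Type u} (lt : List α → List α → Prop)
    (w : List α) (i j k : ℕ) : Prop :=
  i < k ∧ k ≤ j ∧ ∀ k', i < k' → k' ≤ j → k' ≠ k → lt (factor w k' j) (factor w k j)
/-- `listPow u n` is the `n`-th power `u^n` of the word `u`. -/
def listPow {α : Type u} (v : List α) : ℕ → List α
  | 0 => []
  | n + 1 => v ++ listPow v n

/-- A word is primitive if it is not a proper power. -/
def Primitive {α : Type u} (v : List α) : Prop :=
  v ≠ [] ∧ ∀ r n, 2 ≤ n → v ≠ listPow r n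

/-- `c` is a conjugate (rotation) of `v`. -/
def IsConjWord {α : Type u} (v c : List α) : Prop := ∃ s t, v = s ++ t ∧ c = t ++ s
/-- `u` is a Lyndon word for the alphabet order `r`: nonempty and lexicographically
smaller than each of its proper nonempty suffixes. -/
def IsLyndonWrt {α : Type u} (r : α → α → Prop) (v : List α) : Prop :=
  v ≠ [] ∧ ∀ t, t <:+ v → t ≠ v → t ≠ [] → List.Lex r v t

/-- The run `[i..j]` in `w` is governed by the order `r`: either the run ends the word,
or the letter following the run is `r`-smaller than the letter one period before it. -/
noncomputable def UseOrd {α : Type u} (r : α → α → Prop) (w : List α) (i j : ℕ) : Prop :=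
  j + 1 = w.length ∨
    ∃ a b, w[j + 1]? = some a ∧ w[j + 1 - minPeriod (factor w i j)]? = some b ∧ r a b

/-- `v` is the Lyndon root (w.r.t. the order `r`) of the run `[i..j]` of `w`:
the Lyndon conjugate of its root. -/
def LyndonRootOf {α : Type u} (r : α → α → Prop) (w : List α) (i j : ℕ) (v : List α) : Prop :=
  IsLyndonWrt r v ∧ IsConjWord (factor w i (i + minPeriod (factor w i j) - 1)) v

/-- `[a..b]` is the Lroot of the run `[i..j]` of `w`: the interval of the first occurrence,
inside the run, of the Lyndon root of the run, taken with respect to the lexicographic order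
determined by the letter following the run. -/
noncomputable def IsLroot {α : Type u} [LinearOrder α] (w : List α) (i j a b : ℕ) : Prop :=
  IsRun w i j ∧
  ∃ v, ((UseOrd (· < ·) w i j ∧ LyndonRootOf (· < ·) w i j v) ∨
        (¬ UseOrd (· < ·) w i j ∧ LyndonRootOf (· > ·) w i j v)) ∧
    i ≤ a ∧ b ≤ j ∧ b + 1 = a + v.length ∧ factor w a b = v ∧
    ∀ a', i ≤ a' → a' < a → factor w a' (a' + v.length - 1) ≠ v
/-- `[a..b]` is the Oroot of the run `[i..j]` of `w` (Bannai et al.): if the run ends the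
word, or the letter following the run is smaller than the letter one period before it,
it is the first occurrence of a Lyndon root of the run that is not a prefix of the run;
otherwise it is the interval of the length-`p` prefix of the greatest proper suffix of
the run factor. -/
noncomputable def IsOroot {α : Type u} [LinearOrder α] (w : List α) (i j a b : ℕ) : Prop :=
  IsRun w i j ∧ b + 1 = a + minPeriod (factor w i j) ∧
  ((UseOrd (· < ·) w i j ∧ i < a ∧ b ≤ j ∧
      ∃ v, (LyndonRootOf (· < ·) w i j v ∨ LyndonRootOf (· > ·) w i j v) ∧
        factor w a b = v ∧
        ∀ a', i < a' → a' < a → factor w a' (a' + minPeriod (factor w i j) - 1) ≠ v) ∨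
    (¬ UseOrd (· < ·) w i j ∧
      IsGreatestProperSuffixPos (List.Lex (· < ·)) w i j a))

/-- `[a..b]` is the Oroot of the run `[i..j]` of `w` obtained with respect to the
alphabet order `r`: the run is governed by `r`, and `[a..b]` is the first occurrence of
the `r`-Lyndon root of the run that is not a prefix of the run. -/
noncomputable def IsOrootOrd {α : Type u} (r : α → α → Prop) (w : List α) (i j a b : ℕ) : Prop :=
  IsRun w i j ∧ UseOrd r w i j ∧ b + 1 = a + minPeriod (factor w i j) ∧ i < a ∧ b ≤ j ∧
  LyndonRootOf r w i j (factor w a b) ∧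
  ∀ a', i < a' → a' < a → factor w a' (a' + minPeriod (factor w i j) - 1) ≠ factor w a b


/-!
Both roots are pinned to the end of the first period of the run `[ir..jr]`, of length
`p = minPeriod`. The Lroot is an occurrence of length `p` starting at or after `ir`, so it ends at
or after `ir + p - 1`. The Oroot starts at most at `ir + p`: one period further left, periodicity
reproduces the same root (contradicting the first-occurrence choice) or a longer suffix having
the suffix at the Oroot as a prefix (contradicting maximality). Squeezed by `bL ≤ i + ℓ - 1` and
`i + ℓ ≤ aO`, both bounds are attained.
-/

section Factors

variable {α : Type u}

theorem factor_getElem? (w : List α) (a b k : ℕ) :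
    (factor w a b)[k]? = if k < b - a + 1 then w[a + k]? else none := by
  simp [factor, List.getElem?_take, List.getElem?_drop]

theorem length_factor {w : List α} {a b : ℕ} (hab : a ≤ b) (hb : b < w.length) :
    (factor w a b).length = b - a + 1 := by
  simp only [factor, List.length_take, List.length_drop]
  omega

theorem factor_add_eq_factor {w : List α} {a b p : ℕ} (hab : a ≤ b)
    (hper : ∀ m, a ≤ m → m ≤ b → w[m]? = w[m + p]?) :
    factor w (a + p) (b + p) = factor w a b := by
  refine List.ext_getElem? fun k => ?_
  rw [factor_getElem?, factor_getElem?, show b + p - (a + p) = b - a by omega]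
  split_ifs with hk
  · rw [hper (a + k) le_self_add (by omega)]
    congr 1
    omega
  · rfl

theorem factor_add_prefix {w : List α} {a j p : ℕ} (hapj : a + p ≤ j)
    (hper : ∀ m, a ≤ m → m + p ≤ j → w[m]? = w[m + p]?) :
    factor w (a + p) j <+: factor w a j := by
  rw [List.prefix_iff_eq_take]
  refine List.ext_getElem? fun k => ?_
  have hlen : (factor w (a + p) j).length = min (j - (a + p) + 1) (w.length - (a + p)) := by
    simp only [factor, List.length_take, List.length_drop]
  rw [List.getElem?_take, hlen, factor_getElem?, factor_getElem?]
  by_cases hk : k < j - (a + p) + 1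
  · by_cases hkw : a + p + k < w.length
    · rw [if_pos hk, if_pos (by omega), if_pos (by omega), hper (a + k) le_self_add (by omega)]
      congr 1
      omega
    · rw [if_pos hk, if_neg (by omega), List.getElem?_eq_none (by omega)]
  · rw [if_neg hk, if_neg (by omega)]

end Factors

theorem not_lex_lt_of_prefix {α : Type u} [LinearOrder α] {l₁ l₂ : List α} (h : l₁ <+: l₂) :
    ¬ List.Lex (· < ·) l₂ l₁ := by
  rw [← List.lt_iff_lex_lt]
  exact h.le

theorem IsConjWord.length_eq {α : Type u} {v c : List α} (h : IsConjWord v c) :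
    c.length = v.length := by
  obtain ⟨s, t, rfl, rfl⟩ := h
  simp only [List.length_append]
  omega

theorem hasPeriodLen_minPeriod {α : Type u} {u : List α} (hu : u ≠ []) :
    HasPeriodLen u (minPeriod u) :=
  Nat.sInf_mem (s := {p | HasPeriodLen u p})
    ⟨u.length, List.length_pos_of_ne_nil hu, fun k hk => absurd hk (by omega)⟩

namespace IsRun

variable {α : Type u} {w : List α} {i j : ℕ}

theorem hasPeriodLen_minPeriod (h : IsRun w i j) :
    HasPeriodLen (factor w i j) (minPeriod (factor w i j)) := by
  refine _root_.hasPeriodLen_minPeriod (List.ne_nil_of_length_pos ?_)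
  rw [length_factor h.1.le h.2.1]
  omega

theorem one_le_minPeriod (h : IsRun w i j) : 1 ≤ minPeriod (factor w i j) :=
  h.hasPeriodLen_minPeriod.1

theorem getElem?_add_minPeriod (h : IsRun w i j) {m : ℕ} (him : i ≤ m)
    (hmj : m + minPeriod (factor w i j) ≤ j) :
    w[m]? = w[m + minPeriod (factor w i j)]? := by
  set p := minPeriod (factor w i j)
  have hlen := length_factor h.1.le h.2.1
  have hper := h.hasPeriodLen_minPeriod.2 (m - i) (by omega)
  rwa [factor_getElem?, factor_getElem?, if_pos (by omega), if_pos (by omega),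
    show i + (m - i) = m by omega, show i + (m - i + p) = m + p by omega] at hper

theorem length_of_lyndonRootOf {r : α → α → Prop} {v : List α} (h : IsRun w i j)
    (hv : LyndonRootOf r w i j v) : v.length = minPeriod (factor w i j) := by
  have hp := h.one_le_minPeriod
  obtain ⟨hij, hj, h2p, -⟩ := h
  rw [hv.2.length_eq, length_factor (by omega) (by omega)]
  omega

end IsRun

theorem IsLroot.add_minPeriod_le {α : Type u} [LinearOrder α] {w : List α} {i j a b : ℕ}
    (h : IsLroot w i j a b) : i + minPeriod (factor w i j) ≤ b + 1 := by
  obtain ⟨hrun, v, hv, hia, -, hb, -⟩ := h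
  have hlen : v.length = minPeriod (factor w i j) := by
    rcases hv with ⟨-, hv⟩ | ⟨-, hv⟩ <;> exact hrun.length_of_lyndonRootOf hv
  omega

theorem IsOroot.le_add_minPeriod {α : Type u} [LinearOrder α] {w : List α} {i j a b : ℕ}
    (h : IsOroot w i j a b) : a ≤ i + minPeriod (factor w i j) := by
  obtain ⟨hrun, hb, hcase⟩ := h
  set p := minPeriod (factor w i j)
  have hp := hrun.one_le_minPeriod
  by_contra! hgt
  have hper : ∀ m, a - p ≤ m → m + p ≤ j → w[m]? = w[m + p]? :=
    fun m hm hmj => hrun.getElem?_add_minPeriod (by omega) hmj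
  rcases hcase with ⟨-, -, hbj, v, -, rfl, hfirst⟩ | ⟨-, -, haj, hsuf⟩
  · refine hfirst (a - p) (by omega) (by omega) ?_
    have hshift := factor_add_eq_factor (a := a - p) (b := b - p) (by omega)
      fun m hm hmb => hper m hm (by omega)
    rw [Nat.sub_add_cancel (by omega : p ≤ a), Nat.sub_add_cancel (by omega : p ≤ b)] at hshift
    rw [show a - p + p - 1 = b - p by omega, hshift]
  · have hprefix := factor_add_prefix (by omega) hper
    rw [show a - p + p = a by omega] at hprefix
    exact not_lex_lt_of_prefix hprefix (hsuf (a - p) (by omega) (by omega) (by omega))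

theorem oroot_after_lyndon_interval_general {α : Type u} [LinearOrder α] (w : List α)
    (i ℓ ir jr aL bL aO bO : ℕ) (hℓ : 0 < ℓ)
    (hL : IsLroot w ir jr aL bL) (hO : IsOroot w ir jr aO bO)
    (hin2 : bL ≤ i + ℓ - 1) (hout : i + ℓ ≤ aO) :
    bL = i + ℓ - 1 ∧ aO = i + ℓ := by
  have hLend := hL.add_minPeriod_le
  have hOstart := hO.le_add_minPeriod
  omega

/-- If a Lyndon word occupies the interval `[i..i+ℓ-1]`, a run has its Lroot inside this
interval, and the run's Oroot starts at a position `≥ i+ℓ`, then the Lroot ends at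
position `i+ℓ-1` and the Oroot starts at position `i+ℓ`. -/
theorem oroot_after_lyndon_interval {α : Type u} [LinearOrder α] (w : List α)
    (i ℓ ir jr aL bL aO bO : ℕ) (hℓ : 0 < ℓ)
    (hlyn : IsLyndonWrt (· < ·) (factor w i (i + ℓ - 1)))
    (hL : IsLroot w ir jr aL bL) (hO : IsOroot w ir jr aO bO)
    (hin1 : i ≤ aL) (hin2 : bL ≤ i + ℓ - 1) (hout : i + ℓ ≤ aO) :
    bL = i + ℓ - 1 ∧ aO = i + ℓ :=
  oroot_after_lyndon_interval_general w i ℓ ir jr aL bL aO bO hℓ hL hO hin2 hout
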